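/- arXiv:1201.1021 — 3 statements merged into one kernel-verified Lean document; each statement's English description precedes it below -/
import Mathlib

section
/- Let $F:[0,\infty) \to \mathbb{R}$ be nondecreasing with $F(0)=0$, $F(x)>0$ for $x>0$, and suppose there exist $M > 1$ and $\gamma > 1$ such that $F(Mr) \ge \gamma F(r)$ for all $r > 0$. Then for all $x > 0$, $\int_0^x \frac{F(s)}{s}\, ds \le \frac{\gamma(M-1)}{\gamma - 1} F(x)$. -/
open MeasureTheory Set

/-! The measure `ds / s` is invariant under `s ↦ s / M`, so the part of `I = ∫₀ˣ F(s)/s ds`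
over `(0, x/M]` equals `∫₀ˣ F(t/M)/t dt ≤ I / γ`, while the part over `(x/M, x]` is at most
`(M - 1) F(x)` by monotonicity. Hence `I ≤ I / γ + (M - 1) F(x)`; if `F(s)/s` is not integrable
the Bochner integral is `0` and the bound is trivial. -/

theorem integral_div_id_comp_div (g : ℝ → ℝ) {c : ℝ} (hc : c ≠ 0) (a b : ℝ) :
    ∫ t in a..b, g (t / c) / t = ∫ s in a / c..b / c, g s / s := by
  have h := intervalIntegral.integral_comp_div (fun s => g s / s) hc (a := a) (b := b)
  simp only [div_div_eq_mul_div, mul_comm _ c, mul_div_assoc, intervalIntegral.integral_const_mul,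
    smul_eq_mul] at h
  exact mul_left_cancel₀ hc h

theorem setIntegral_Ioc_zero_div_id_comp_div (g : ℝ → ℝ) {c x : ℝ} (hc : 0 < c) (hx : 0 ≤ x) :
    ∫ t in Ioc 0 x, g (t / c) / t = ∫ s in Ioc 0 (x / c), g s / s := by
  rw [← intervalIntegral.integral_of_le hx, ← intervalIntegral.integral_of_le (by positivity),
    integral_div_id_comp_div g hc.ne', zero_div]

theorem setIntegral_Ioc_div_id_le {F : ℝ → ℝ} {a b : ℝ} (ha : 0 < a) (hab : a ≤ b)
    (hnonneg : ∀ s ∈ Ioc a b, 0 ≤ F s) (hle : ∀ s ∈ Ioc a b, F s ≤ F b) :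
    ∫ s in Ioc a b, F s / s ≤ (b - a) / a * F b := by
  have hbound : ∀ s ∈ Ioc a b, ‖F s / s‖ ≤ F b / a := fun s hs => by
    have hs0 : 0 < s := ha.trans hs.1
    rw [Real.norm_eq_abs, abs_of_nonneg (div_nonneg (hnonneg s hs) hs0.le)]
    exact div_le_div₀ ((hnonneg s hs).trans (hle s hs)) (hle s hs) ha hs.1.le
  calc ∫ s in Ioc a b, F s / s ≤ ‖∫ s in Ioc a b, F s / s‖ := Real.le_norm_self _
    _ ≤ F b / a * volume.real (Ioc a b) :=
        norm_setIntegral_le_of_norm_le_const (by simp) hbound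
    _ = (b - a) / a * F b := by
        rw [Real.volume_real_Ioc_of_le hab]; ring

theorem setIntegral_Ioc_zero_div_id_le_mul_of_comp_div_le {F : ℝ → ℝ} {c k x : ℝ} (hc : 0 < c)
    (hx : 0 ≤ x) (hint : IntegrableOn (fun s => F s / s) (Ioc 0 x))
    (hnonneg : ∀ t ∈ Ioc 0 x, 0 ≤ F (t / c)) (hle : ∀ t ∈ Ioc 0 x, F (t / c) ≤ k * F t) :
    ∫ s in Ioc 0 (x / c), F s / s ≤ k * ∫ s in Ioc 0 x, F s / s := by
  rw [← setIntegral_Ioc_zero_div_id_comp_div F hc hx, ← integral_const_mul]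
  refine integral_mono_of_nonneg ?_ (hint.const_mul k) ?_
  · exact (ae_restrict_iff' measurableSet_Ioc).2 <| .of_forall fun t ht =>
      div_nonneg (hnonneg t ht) ht.1.le
  · exact (ae_restrict_iff' measurableSet_Ioc).2 <| .of_forall fun t ht => by
      show F (t / c) / t ≤ k * (F t / t)
      rw [← mul_div_assoc]
      exact div_le_div_of_nonneg_right (hle t ht) ht.1.le

theorem setIntegral_Ioc_add_Ioc {f : ℝ → ℝ} {a b c : ℝ} (hab : a ≤ b) (hbc : b ≤ c)
    (hf : IntegrableOn f (Ioc a c)) :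
    (∫ s in Ioc a b, f s) + ∫ s in Ioc b c, f s = ∫ s in Ioc a c, f s := by
  rw [← setIntegral_union (Ioc_disjoint_Ioc_of_le le_rfl) measurableSet_Ioc
    (hf.mono_set (Ioc_subset_Ioc_right hbc)) (hf.mono_set (Ioc_subset_Ioc_left hab)),
    Ioc_union_Ioc_eq_Ioc hab hbc]

theorem le_mul_div_sub_one_of_le_inv_mul_add {I C γ : ℝ} (hγ : 1 < γ) (h : I ≤ γ⁻¹ * I + C) :
    I ≤ γ * C / (γ - 1) := by
  rw [le_div_iff₀ (by linarith)]
  have hγI : γ * I ≤ I + γ * C := by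
    calc γ * I ≤ γ * (γ⁻¹ * I + C) := by gcongr
      _ = I + γ * C := by field_simp
  linarith

theorem inverse_doubling_integral_general (F : ℝ → ℝ) (hmono : MonotoneOn F (Ici 0))
    (hFpos : ∀ x : ℝ, 0 < x → 0 < F x)
    (M γ : ℝ) (hM : 1 < M) (hγ : 1 < γ)
    (hinv : ∀ r : ℝ, 0 < r → γ * F r ≤ F (M * r)) :
    ∀ x : ℝ, 0 < x →
      ∫ s in Ioc (0 : ℝ) x, F s / s ≤ (γ * (M - 1) / (γ - 1)) * F x := by
  intro x hx
  have hM0 : 0 < M := by linarith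
  have hxM : 0 < x / M := div_pos hx hM0
  have hxMx : x / M ≤ x := div_le_self hx.le hM.le
  by_cases hint : IntegrableOn (fun s => F s / s) (Ioc 0 x)
  swap
  · rw [integral_undef hint]
    exact mul_nonneg (div_nonneg (by nlinarith) (by linarith)) (hFpos x hx).le
  have hlow : ∫ s in Ioc 0 (x / M), F s / s ≤ γ⁻¹ * ∫ s in Ioc 0 x, F s / s :=
    setIntegral_Ioc_zero_div_id_le_mul_of_comp_div_le hM0 hx.le hint
      (fun t ht => (hFpos _ (div_pos ht.1 hM0)).le) fun t ht => by
        rw [le_inv_mul_iff₀ (by linarith)]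
        simpa only [mul_div_cancel₀ t hM0.ne'] using hinv (t / M) (div_pos ht.1 hM0)
  have hhigh : ∫ s in Ioc (x / M) x, F s / s ≤ (M - 1) * F x := by
    have h := setIntegral_Ioc_div_id_le hxM hxMx (fun s hs => (hFpos s (hxM.trans hs.1)).le)
      (fun s hs => hmono (hxM.trans hs.1).le hx.le hs.2)
    rwa [show (x - x / M) / (x / M) = M - 1 by field_simp] at h
  calc ∫ s in Ioc 0 x, F s / s ≤ γ * ((M - 1) * F x) / (γ - 1) :=
        le_mul_div_sub_one_of_le_inv_mul_add hγ <|
          (setIntegral_Ioc_add_Ioc hxM.le hxMx hint).symm.trans_le (add_le_add hlow hhigh)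
    _ = (γ * (M - 1) / (γ - 1)) * F x := by ring

/-- Inverse doubling condition gives an integral estimate:
if `F` is nondecreasing on `[0,∞)`, `F 0 = 0`, `F x > 0` for `x > 0`, and
`F (M r) ≥ γ F r` for all `r > 0` with `M, γ > 1`, then
`∫₀ˣ F(s)/s ds ≤ γ(M-1)/(γ-1) · F x`. -/
theorem inverse_doubling_integral (F : ℝ → ℝ) (hmono : MonotoneOn F (Ici 0))
    (hF0 : F 0 = 0) (hFpos : ∀ x : ℝ, 0 < x → 0 < F x)
    (M γ : ℝ) (hM : 1 < M) (hγ : 1 < γ)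
    (hinv : ∀ r : ℝ, 0 < r → γ * F r ≤ F (M * r)) :
    ∀ x : ℝ, 0 < x →
      ∫ s in Ioc (0 : ℝ) x, F s / s ≤ (γ * (M - 1) / (γ - 1)) * F x :=
  inverse_doubling_integral_general F hmono hFpos M γ hM hγ hinv
end

section
/- Let $\tilde\nu$ be a positive regular Borel measure on $[0,\infty)$ satisfying the doubling condition with constant $R$ and with $\tilde\nu(\{0\})=0$, and $\tilde\nu[0,t)>0$ for $t>0$, $\tilde\nu[0,t)\to\infty$ as $t\to\infty$. Define $F(r)=\tilde\nu[0,r)$ and for $n\in\mathbb{Z}$ let $a_n = \sup\{r \ge 0 : F(r) \le (2R)^{2n}\}$. Then $(2R)^{2n} \ge F(a_n) \ge \frac{1}{R}(2R)^{2n}$ for all $n$. -/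
/-!
Write `F r = ν[0, r)` and `c = (2R)^(2n)`. The function `F` is left-continuous, so `F(a_n) ≤ c`
because `F ≤ c` on `[0, a_n)`. Since `ν {0} = 0`, `F` is small near `0`, so `a_n > 0`; then
`2 a_n` lies beyond the supremum, whence `c < F(2 a_n) ≤ R F(a_n)` by doubling.
-/

open MeasureTheory Set Filter Topology
open scoped ENNReal

theorem biInter_Ico_gt {α : Type*} [LinearOrder α] [NoMaxOrder α] (a : α) :
    ⋂ r > a, Ico a r = {a} := by
  ext x
  simp only [mem_iInter, mem_Ico, mem_singleton_iff]
  refine ⟨fun h => ?_, fun hx r hr => ⟨hx.ge, hx ▸ hr⟩⟩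
  obtain ⟨r, hr⟩ := exists_gt a
  exact le_antisymm (not_lt.1 fun hx => lt_irrefl x (h x hx).2) (h r hr).1

theorem tendsto_measure_Ico_nhdsGT {α : Type*} [LinearOrder α] [NoMaxOrder α]
    [TopologicalSpace α] [OrderTopology α] [FirstCountableTopology α] [MeasurableSpace α]
    [OpensMeasurableSpace α] {μ : Measure α} {a : α} (h : ∃ r > a, μ (Ico a r) ≠ ∞) :
    Tendsto (fun r => μ (Ico a r)) (𝓝[>] a) (𝓝 (μ {a})) := by
  rw [← biInter_Ico_gt a]
  exact tendsto_measure_biInter_gt (fun _ _ => nullMeasurableSet_Ico)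
    (fun _ _ _ hij => Ico_subset_Ico_right hij) h

theorem measure_Ico_eq_biSup_lt (μ : Measure ℝ) (a b : ℝ) :
    μ (Ico a b) = ⨆ s < b, μ (Ico a s) := by
  have hunion : Ico a b = ⋃ s : Iio b, Ico a (s : ℝ) := by
    ext x
    simp only [mem_Ico, mem_iUnion, Subtype.exists, mem_Iio, exists_prop]
    refine ⟨fun ⟨hax, hxb⟩ => ?_, fun ⟨s, hsb, hax, hxs⟩ => ⟨hax, hxs.trans hsb⟩⟩
    obtain ⟨s, hxs, hsb⟩ := exists_between hxb
    exact ⟨s, hsb, hax, hxs⟩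
  have hmono : Monotone fun s : Iio b => Ico a (s : ℝ) := fun _ _ hst => Ico_subset_Ico_right hst
  rw [hunion, hmono.measure_iUnion, iSup_subtype']
  rfl

theorem measure_Ico_csSup_le {μ : Measure ℝ} {a : ℝ} {S : Set ℝ} {c : ℝ≥0∞}
    (hne : S.Nonempty) (hS : ∀ r ∈ S, μ (Ico a r) ≤ c) : μ (Ico a (sSup S)) ≤ c := by
  rw [measure_Ico_eq_biSup_lt]
  refine iSup₂_le fun s hs => ?_
  obtain ⟨r, hrS, hsr⟩ := exists_lt_of_lt_csSup hne hs
  exact (measure_mono (Ico_subset_Ico_right hsr.le)).trans (hS r hrS)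

theorem bddAbove_setOf_le_of_tendsto_top {α : Type*} [LinearOrder α] [Nonempty α]
    {f : α → ℝ≥0∞} (hf : Tendsto f atTop (𝓝 ∞)) {c : ℝ≥0∞} (hc : c ≠ ∞) :
    BddAbove {r | f r ≤ c} := by
  obtain ⟨T, hT⟩ := eventually_atTop.1 (hf.eventually (eventually_gt_nhds hc.lt_top))
  exact ⟨T, fun r hr => le_of_not_gt fun hTr => (hT r hTr.le).not_ge hr⟩

theorem measure_Ico_sSup_sublevel_bounds {ν : Measure ℝ} {R c : ℝ≥0∞}
    (hdb : ∀ t : ℝ, 0 < t → ν (Ico 0 (2 * t)) ≤ R * ν (Ico 0 t))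
    (hfin : ∃ r > 0, ν (Ico 0 r) ≠ ∞) (h0 : ν {0} = 0)
    (htop : Tendsto (fun t : ℝ => ν (Ico 0 t)) atTop (𝓝 ∞)) (hc0 : c ≠ 0) (hc : c ≠ ∞)
    {a : ℝ} (ha : a = sSup {r : ℝ | 0 ≤ r ∧ ν (Ico 0 r) ≤ c}) :
    ν (Ico 0 a) ≤ c ∧ c / R ≤ ν (Ico 0 a) := by
  set S := {r : ℝ | 0 ≤ r ∧ ν (Ico 0 r) ≤ c}
  have hbdd : BddAbove S :=
    (bddAbove_setOf_le_of_tendsto_top htop hc).mono fun _ hr => hr.2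
  obtain ⟨t, ht0, htS⟩ : ∃ t > 0, t ∈ S := by
    have hsmall := (tendsto_measure_Ico_nhdsGT hfin).eventually
      (gt_mem_nhds (h0.trans_lt (pos_iff_ne_zero.2 hc0)))
    obtain ⟨t, htc, ht0⟩ := (hsmall.and self_mem_nhdsWithin).exists
    exact ⟨t, ht0, ht0.le, htc.le⟩
  have ha0 : 0 < a := ha ▸ ht0.trans_le (le_csSup hbdd htS)
  refine ⟨ha ▸ measure_Ico_csSup_le ⟨t, htS⟩ fun r hr => hr.2, ENNReal.div_le_of_le_mul ?_⟩
  have h2a : 2 * a ∉ S := fun h2a => by linarith [ha ▸ le_csSup hbdd h2a]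
  have hc2a : c < ν (Ico 0 (2 * a)) := by
    simp only [S, mem_ofPred_eq, not_and, not_le] at h2a
    exact h2a (by linarith)
  calc c ≤ ν (Ico 0 (2 * a)) := hc2a.le
    _ ≤ R * ν (Ico 0 a) := hdb a ha0
    _ = ν (Ico 0 a) * R := mul_comm _ _

theorem F_at_an_bounds_general (ν : Measure ℝ) (R : NNReal) (hR : 1 ≤ R)
    (hdb : ∀ t : ℝ, 0 < t → ν (Ico 0 (2 * t)) ≤ (R : ENNReal) * ν (Ico 0 t))
    (hfin : ∀ t : ℝ, ν (Ico 0 t) < ⊤)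
    (h0 : ν {0} = 0)
    (htop : Filter.Tendsto (fun t : ℝ => ν (Ico 0 t)) Filter.atTop (nhds ⊤))
    (a : ℤ → ℝ)
    (ha : ∀ n : ℤ, a n = sSup {r : ℝ | 0 ≤ r ∧ ν (Ico 0 r) ≤ (2 * (R : ENNReal)) ^ (2 * n)}) :
    ∀ n : ℤ, ν (Ico 0 (a n)) ≤ (2 * (R : ENNReal)) ^ (2 * n) ∧
      (2 * (R : ENNReal)) ^ (2 * n) / (R : ENNReal) ≤ ν (Ico 0 (a n)) := by
  intro n
  have h2R0 : 2 * (R : ℝ≥0∞) ≠ 0 :=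
    mul_ne_zero two_ne_zero (ENNReal.coe_ne_zero.2 (zero_lt_one.trans_le hR).ne')
  have h2R : 2 * (R : ℝ≥0∞) ≠ ∞ := ENNReal.mul_ne_top ENNReal.ofNat_ne_top ENNReal.coe_ne_top
  exact measure_Ico_sSup_sublevel_bounds hdb ⟨1, one_pos, (hfin 1).ne⟩ h0 htop
    (ENNReal.zpow_pos h2R0 h2R _).ne' (ENNReal.zpow_lt_top h2R0 h2R _).ne (ha n)

/-- For a doubling measure `ν` on `[0,∞)` with `ν({0}) = 0`, the sequence
`a_n = sup { r ≥ 0 : ν[0,r) ≤ (2R)^(2n) }` satisfies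
`(2R)^(2n) ≥ ν[0, a_n) ≥ (2R)^(2n) / R`. -/
theorem F_at_an_bounds (ν : Measure ℝ) (R : NNReal) (hR : 1 ≤ R)
    (hdb : ∀ t : ℝ, 0 < t → ν (Ico 0 (2 * t)) ≤ (R : ENNReal) * ν (Ico 0 t))
    (hfin : ∀ t : ℝ, ν (Ico 0 t) < ⊤)
    (h0 : ν {0} = 0)
    (hpos : ∀ t : ℝ, 0 < t → 0 < ν (Ico 0 t))
    (htop : Filter.Tendsto (fun t : ℝ => ν (Ico 0 t)) Filter.atTop (nhds ⊤))
    (a : ℤ → ℝ)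
    (ha : ∀ n : ℤ, a n = sSup {r : ℝ | 0 ≤ r ∧ ν (Ico 0 r) ≤ (2 * (R : ENNReal)) ^ (2 * n)}) :
    ∀ n : ℤ, ν (Ico 0 (a n)) ≤ (2 * (R : ENNReal)) ^ (2 * n) ∧
      (2 * (R : ENNReal)) ^ (2 * n) / (R : ENNReal) ≤ ν (Ico 0 (a n)) :=
  F_at_an_bounds_general ν R hR hdb hfin h0 htop a ha
end

section
/- Let $\mu$ be a positive regular Borel measure on $\mathbb{C}_+$, $1 \le p, q < \infty$ with $p > 1$, and suppose the Laplace--Carleson embedding $\mathcal{L}: L^p(0,\infty) \to L^q(\mathbb{C}_+,\mu)$ is bounded with norm $M$. Then there is a constant $C_{p,q}$ (depending only on $p$, $q$, $M$) such that $\mu(Q_I) \le C_{p,q} |I|^{q/p'}$ for every interval $I \subset i\mathbb{R}$, where $p' = p/(p-1)$. -/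
/-!
Test the embedding on `f(t) = e^{-λ̄t}`, where `λ = h/2 + ic` is the centre of the Carleson
square `Q` of side `h`. Then `‖f‖_p^p = 2/(ph)`, while `ℒf(z) = 1/(z + λ̄)` has modulus at least
`1/(2h)` on `Q`. Chebyshev's inequality for `|ℒf|^q` on `Q` gives
`μ(Q) ≤ (2h)^q M^q (2/(ph))^{q/p}`, which is a constant times `h^{q(1 - 1/p)}`.
-/

open MeasureTheory Set Real Complex

/-- The Carleson square over the interval of centre `c` and length `h` on the
imaginary axis. -/
def carlesonSquare (c h : ℝ) : Set ℂ :=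
  {z : ℂ | 0 < z.re ∧ z.re < h ∧ |z.im - c| ≤ h / 2}

open scoped ENNReal

theorem measure_le_rpow_div_of_le_of_lintegral_rpow_le {α : Type*} [MeasurableSpace α]
    {μ : Measure α} {s : Set α} (hs : MeasurableSet s) {g : α → ℝ≥0∞} {a b q : ℝ}
    (ha : 0 < a) (hb : 0 ≤ b) (hq : 0 < q) (hg : ∀ x ∈ s, ENNReal.ofReal a ≤ g x)
    (hint : (∫⁻ x, g x ^ q ∂μ) ^ (1 / q) ≤ ENNReal.ofReal b) :
    μ s ≤ ENNReal.ofReal ((b / a) ^ q) := by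
  have hchebyshev : ENNReal.ofReal (a ^ q) * μ s ≤ ENNReal.ofReal (b ^ q) := calc
    _ = ∫⁻ _ in s, ENNReal.ofReal a ^ q ∂μ := by
      rw [setLIntegral_const, ENNReal.ofReal_rpow_of_pos ha]
    _ ≤ ∫⁻ x in s, g x ^ q ∂μ :=
      setLIntegral_mono' hs fun x hx => ENNReal.rpow_le_rpow (hg x hx) hq.le
    _ ≤ ∫⁻ x, g x ^ q ∂μ := setLIntegral_le_lintegral _ _
    _ ≤ ENNReal.ofReal b ^ q := by rwa [← ENNReal.rpow_inv_le_iff hq, ← one_div]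
    _ = ENNReal.ofReal (b ^ q) := ENNReal.ofReal_rpow_of_nonneg hb hq.le
  rwa [div_rpow hb ha.le, ENNReal.ofReal_div_of_pos (rpow_pos_of_pos ha q),
    ENNReal.le_div_iff_mul_le (.inl (by simpa using rpow_pos_of_pos ha q))
      (.inl ENNReal.ofReal_ne_top),
    mul_comm]

theorem integral_Ioi_cexp_neg_mul_mul_cexp_neg_mul {z w : ℂ} (hzw : 0 < (z + w).re) :
    ∫ t in Ioi (0 : ℝ), cexp (-(t : ℂ) * z) * cexp (-(t : ℂ) * w) = (z + w)⁻¹ := by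
  have := integral_exp_mul_complex_Ioi (a := -(z + w)) (by rw [neg_re]; linarith) 0
  rw [ofReal_zero, mul_zero, Complex.exp_zero, neg_div_neg_eq, one_div] at this
  rw [← this]
  congr 1 with t
  rw [← Complex.exp_add]
  ring_nf

theorem lintegral_Ioi_nnnorm_cexp_neg_mul_rpow {w : ℂ} (hw : 0 < w.re) {p : ℝ} (hp : 0 < p) :
    ∫⁻ t in Ioi (0 : ℝ), (‖cexp (-(t : ℂ) * w)‖₊ : ℝ≥0∞) ^ p = ENNReal.ofReal (p * w.re)⁻¹ := by
  have hpw : -(p * w.re) < 0 := by simp only [neg_lt_zero]; positivity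
  have hpt : ∀ t : ℝ, (‖cexp (-(t : ℂ) * w)‖₊ : ℝ≥0∞) ^ p
      = ENNReal.ofReal (Real.exp (-(p * w.re) * t)) := by
    intro t
    rw [← enorm_eq_nnnorm, ← ofReal_norm, Complex.norm_exp,
      ENNReal.ofReal_rpow_of_pos (Real.exp_pos _), ← Real.exp_mul]
    congr 2
    simp only [neg_mul, neg_re, mul_re, ofReal_re, ofReal_im, zero_mul, sub_zero, neg_inj]
    ring
  simp_rw [hpt]
  rw [← ofReal_integral_eq_lintegral_ofReal (integrableOn_exp_mul_Ioi hpw 0)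
      (ae_of_all _ fun t => (Real.exp_pos _).le), integral_exp_mul_Ioi hpw 0]
  simp

theorem measurableSet_carlesonSquare (c h : ℝ) : MeasurableSet (carlesonSquare c h) :=
  (measurableSet_lt measurable_const measurable_re).inter
    ((measurableSet_lt measurable_re measurable_const).inter
      (measurableSet_le (measurable_im.sub_const c).abs measurable_const))

theorem norm_add_le_of_mem_carlesonSquare {c h : ℝ} {z : ℂ} (hz : z ∈ carlesonSquare c h) :
    ‖z + ⟨h / 2, -c⟩‖ ≤ 2 * h := by
  obtain ⟨hre0, hreh, him⟩ := hz
  calc ‖z + ⟨h / 2, -c⟩‖ ≤ |z.re + h / 2| + |z.im - c| := by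
        simpa [← sub_eq_add_neg] using Complex.norm_le_abs_re_add_abs_im (z + ⟨h / 2, -c⟩)
    _ ≤ 2 * h := by rw [abs_of_pos (by linarith)]; linarith

theorem ofReal_inv_two_mul_le_nnnorm_laplace_of_mem_carlesonSquare {c h : ℝ} {z : ℂ}
    (hz : z ∈ carlesonSquare c h) :
    ENNReal.ofReal (2 * h)⁻¹
      ≤ ‖∫ t in Ioi (0 : ℝ), cexp (-(t : ℂ) * z) * cexp (-(t : ℂ) * ⟨h / 2, -c⟩)‖₊ := by
  have hre : 0 < (z + ⟨h / 2, -c⟩).re := by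
    rw [add_re]; linarith [hz.1, hz.2.1]
  rw [integral_Ioi_cexp_neg_mul_mul_cexp_neg_mul hre, ← enorm_eq_nnnorm, ← ofReal_norm, norm_inv]
  refine ENNReal.ofReal_le_ofReal (inv_anti₀ ?_ (norm_add_le_of_mem_carlesonSquare hz))
  exact norm_pos_iff.2 fun h0 => by simp [h0] at hre

/-- If the Laplace–Carleson embedding `ℒ : L^p(0,∞) → L^q(ℂ₊, μ)` is bounded
with norm `M`, then `μ(Q_I) ≤ C_{p,q} |I|^{q/p'}` for every interval
`I ⊂ iℝ`, where `p' = p/(p-1)` and `C_{p,q}` depends only on `p, q, M`. -/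
theorem laplace_carleson_necessary (μ : Measure ℂ) (p q M : ℝ)
    (hp : 1 < p) (hq : 1 ≤ q) (hM : 0 < M)
    (hbdd : ∀ f : ℝ → ℂ,
      (∫⁻ z, ((‖∫ t in Ioi (0 : ℝ), Complex.exp (-(t : ℂ) * z) * f t‖₊ : ENNReal)) ^ q ∂μ) ^ (1 / q)
        ≤ ENNReal.ofReal M * (∫⁻ t in Ioi (0 : ℝ), ((‖f t‖₊ : ENNReal)) ^ p) ^ (1 / p)) :
    ∃ C : ℝ, 0 < C ∧ ∀ c h : ℝ, 0 < h →
      μ (carlesonSquare c h) ≤ ENNReal.ofReal (C * h ^ (q * (p - 1) / p)) := by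
  have hp0 : 0 < p := by linarith
  have hq0 : 0 < q := by linarith
  refine ⟨(2 * M * (2 / p) ^ (1 / p)) ^ q, by positivity, fun c h hh => ?_⟩
  -- `⟨h / 2, -c⟩` is `λ̄` for the centre `λ = h/2 + ic` of the square
  have hw : 0 < (⟨h / 2, -c⟩ : ℂ).re := half_pos hh
  have hbound := hbdd fun t => cexp (-(t : ℂ) * ⟨h / 2, -c⟩)
  rw [lintegral_Ioi_nnnorm_cexp_neg_mul_rpow hw hp0,
    ENNReal.ofReal_rpow_of_nonneg (by positivity) (by positivity),
    ← ENNReal.ofReal_mul hM.le] at hbound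
  refine (measure_le_rpow_div_of_le_of_lintegral_rpow_le (measurableSet_carlesonSquare c h)
    (by positivity) (by positivity) hq0
    (fun z hz => ofReal_inv_two_mul_le_nnnorm_laplace_of_mem_carlesonSquare hz) hbound).trans_eq ?_
  congr 1
  rw [show q * (p - 1) / p = (1 - 1 / p) * q by field_simp, rpow_mul hh.le,
    ← mul_rpow (by positivity) (by positivity)]
  congr 1
  rw [show (p * (h / 2))⁻¹ = 2 / p * h⁻¹ by field_simp, mul_rpow (by positivity) (by positivity),
    inv_rpow hh.le, rpow_sub hh, rpow_one]
  field_simp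
end
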